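/- arXiv:1905.03901 — 4 statements merged into one kernel-verified Lean document; each statement's English description precedes it below -/
import Mathlib

section
/- For any sequence a : ℤ → ℝ, any N ∈ ℕ, and λ > 0, M_λ((Δ^N a)[k]) = M_λ((Δ^N (M_λ ∘ a))[k]) for all k ∈ ℤ, where Δ^N denotes the N-fold forward finite difference. -/
/-- Centered modulo operation. -/
noncomputable def cmod (lam f : ℝ) : ℝ :=
  2 * lam * (Int.fract (f / (2 * lam) + 1 / 2) - 1 / 2)

/-- Forward finite difference on sequences. -/
def fdiff (a : ℤ → ℝ) : ℤ → ℝ := fun k => a (k + 1) - a k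

open AddCommGroup

/- `M_λ` is reduction modulo `2λ` into `[-λ, λ)`, so `M_λ x = M_λ y` exactly when `x ≡ y`
modulo `2λ`. Since `a ≡ M_λ ∘ a` termwise and differences of termwise congruent sequences are
again termwise congruent, `Δ^N a ≡ Δ^N (M_λ ∘ a)` termwise. -/

theorem cmod_eq_toIcoMod {lam : ℝ} (hlam : 0 < lam) :
    cmod lam = toIcoMod (by positivity : (0 : ℝ) < 2 * lam) (-lam) := by
  ext f
  rw [toIcoMod_eq_add_fract_mul, cmod]
  field_simp
  ring_nf

theorem fdiff_modEq {p : ℝ} {a b : ℤ → ℝ} (h : ∀ j, a j ≡ b j [PMOD p]) (k : ℤ) :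
    fdiff a k ≡ fdiff b k [PMOD p] :=
  (h (k + 1)).sub (h k)

theorem iterate_fdiff_modEq {p : ℝ} {a b : ℤ → ℝ} (h : ∀ j, a j ≡ b j [PMOD p]) (N : ℕ)
    (k : ℤ) : fdiff^[N] a k ≡ fdiff^[N] b k [PMOD p] := by
  induction N generalizing a b with
  | zero => exact h k
  | succ N ih => exact ih (fdiff_modEq h)

theorem cmod_fdiff_iter_comm (lam : ℝ) (hlam : 0 < lam) (a : ℤ → ℝ) (N : ℕ) (k : ℤ) :
    cmod lam (fdiff^[N] a k) = cmod lam (fdiff^[N] (fun j => cmod lam (a j)) k) := by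
  rw [cmod_eq_toIcoMod hlam, toIcoMod_inj]
  refine iterate_fdiff_modEq (fun j => ?_) N k
  rw [← toIcoMod_inj (by positivity : (0 : ℝ) < 2 * lam) (c := -lam), toIcoMod_toIcoMod]
end

section
/- Let g : ℝ → ℝ be N times continuously differentiable with bounded N-th derivative, T > 0, and let γ[k] = g(kT). Then ‖Δ^N γ‖_∞ ≤ (T e)^N ‖g^{(N)}‖_∞, where e is Euler's number. -/
def stepDiff {𝕜 E : Type*} [AddCommGroup E] [Add 𝕜] (T : 𝕜) (g : 𝕜 → E) : 𝕜 → E :=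
  fun t => g (t + T) - g t

section StepDiff

variable {𝕜 F : Type*} [NontriviallyNormedField 𝕜] [NormedAddCommGroup F] [NormedSpace 𝕜 F]
  {T : 𝕜} {g : 𝕜 → F} {n : ℕ}

theorem ContDiff.comp_add_const (hg : ContDiff 𝕜 n g) (T : 𝕜) :
    ContDiff 𝕜 n (fun t => g (t + T)) :=
  hg.comp (contDiff_id.add contDiff_const)

theorem ContDiff.stepDiff (hg : ContDiff 𝕜 n g) : ContDiff 𝕜 n (stepDiff T g) :=
  (hg.comp_add_const T).sub hg

theorem iteratedDeriv_stepDiff (hg : ContDiff 𝕜 n g) :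
    iteratedDeriv n (stepDiff T g) = stepDiff T (iteratedDeriv n g) := by
  funext t
  unfold stepDiff
  rw [iteratedDeriv_fun_sub (hg.comp_add_const T).contDiffAt hg.contDiffAt,
    iteratedDeriv_comp_add_const]

end StepDiff

section StepDiffBound

variable {𝕜 F : Type*} [RCLike 𝕜] [NormedAddCommGroup F] [NormedSpace 𝕜 F]
  {T : 𝕜} {g : 𝕜 → F} {n : ℕ}

theorem norm_stepDiff_le {M : ℝ} (hg : Differentiable 𝕜 g) (hM : ∀ t, ‖deriv g t‖ ≤ M)
    (t : 𝕜) : ‖stepDiff T g t‖ ≤ M * ‖T‖ := by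
  simpa [stepDiff] using Convex.norm_image_sub_le_of_norm_deriv_le (fun x _ => hg x)
    (fun x _ => hM x) convex_univ (Set.mem_univ t) (Set.mem_univ (t + T))

theorem norm_iteratedDeriv_stepDiff_le {M : ℝ} (hg : ContDiff 𝕜 (n + 1) g)
    (hM : ∀ t, ‖iteratedDeriv (n + 1) g t‖ ≤ M) (t : 𝕜) :
    ‖iteratedDeriv n (stepDiff T g) t‖ ≤ ‖T‖ * M := by
  rw [iteratedDeriv_stepDiff hg.of_succ, mul_comm]
  refine norm_stepDiff_le (hg.differentiable_iteratedDeriv n (by norm_cast; omega)) ?_ t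
  simpa only [iteratedDeriv_succ] using hM

end StepDiffBound

theorem fdiff_samples (g : ℝ → ℝ) (T : ℝ) :
    fdiff (fun k : ℤ => g (k * T)) = fun k : ℤ => stepDiff T g (k * T) := by
  funext k
  simp only [fdiff, stepDiff, Int.cast_add, Int.cast_one, add_mul, one_mul]

theorem abs_fdiff_iterate_samples_le {T M : ℝ} {N : ℕ} {g : ℝ → ℝ} (hg : ContDiff ℝ N g)
    (hM : ∀ t, |iteratedDeriv N g t| ≤ M) (k : ℤ) :
    |fdiff^[N] (fun k : ℤ => g (k * T)) k| ≤ |T| ^ N * M := by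
  induction N generalizing g M with
  | zero => simpa using hM (k * T)
  | succ N ih =>
    have hdiff := ih hg.of_succ.stepDiff (norm_iteratedDeriv_stepDiff_le (T := T) hg hM)
    rw [Function.iterate_succ_apply, fdiff_samples]
    calc _ ≤ |T| ^ N * (‖T‖ * M) := hdiff
      _ = |T| ^ (N + 1) * M := by rw [Real.norm_eq_abs]; ring

theorem fdiff_iter_samples_bound (g : ℝ → ℝ) (N : ℕ) (T : ℝ) (hT : 0 < T)
    (hg : ContDiff ℝ N g) (M : ℝ) (hM : ∀ t : ℝ, |iteratedDeriv N g t| ≤ M)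
    (γ : ℤ → ℝ) (hγ : ∀ k : ℤ, γ k = g (k * T)) :
    ∀ k : ℤ, |fdiff^[N] γ k| ≤ (T * Real.exp 1) ^ N * M := by
  intro k
  obtain rfl : γ = fun k : ℤ => g (k * T) := funext hγ
  have hM_nonneg : 0 ≤ M := (abs_nonneg _).trans (hM 0)
  have hpow : |T| ^ N ≤ (T * Real.exp 1) ^ N := by
    rw [abs_of_pos hT]
    exact pow_le_pow_left₀ hT.le (le_mul_of_one_le_right hT.le (Real.one_le_exp zero_le_one)) N
  exact (abs_fdiff_iterate_samples_le hg hM k).trans (mul_le_mul_of_nonneg_right hpow hM_nonneg)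
end

section
/- Let λ > 0, a : ℤ → ℝ a sequence with M_λ(a[k]) = y[k] for all k, and suppose ‖Δ^N a‖_∞ < λ for some N ∈ ℕ. Then Δ^N a can be computed from y alone: (Δ^N a)[k] = M_λ((Δ^N y)[k]) for all k. -/
/-!
Reducing modulo `2 λ` changes each sample by an integer multiple of `2 λ`, and finite differences
of a sequence with values in the subgroup `2 λ ℤ` stay in it; hence `Δᴺ y ≡ Δᴺ a (mod 2 λ)`.
Applying the `2 λ`-periodic map `M_λ` therefore gives `M_λ (Δᴺ y) = M_λ (Δᴺ a)`, and the latter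
is `Δᴺ a` because `M_λ` fixes `[-λ, λ)`.
-/

open AddSubgroup

theorem cmod_periodic (lam : ℝ) : Function.Periodic (cmod lam) (2 * lam) := by
  intro f
  rcases eq_or_ne lam 0 with rfl | hlam
  · simp [cmod]
  · have hfrac : (f + 2 * lam) / (2 * lam) + 1 / 2 = f / (2 * lam) + 1 / 2 + 1 := by
      field_simp
      ring
    simp only [cmod, hfrac, Int.fract_add_one]

theorem cmod_add_zsmul (lam f : ℝ) (m : ℤ) : cmod lam (f + m • (2 * lam)) = cmod lam f :=
  (cmod_periodic lam).zsmul m f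

theorem cmod_sub_self_mem_zmultiples {lam : ℝ} (hlam : lam ≠ 0) (f : ℝ) :
    cmod lam f - f ∈ zmultiples (2 * lam) := by
  refine mem_zmultiples_iff.mpr ⟨-⌊f / (2 * lam) + 1 / 2⌋, ?_⟩
  rw [cmod, Int.fract, zsmul_eq_mul]
  push_cast
  field_simp
  ring

theorem cmod_eq_self {lam f : ℝ} (hlo : -lam ≤ f) (hhi : f < lam) : cmod lam f = f := by
  have hlam : 0 < 2 * lam := by linarith
  have hlam₀ : lam ≠ 0 := by linarith
  have hshift : f / (2 * lam) + 1 / 2 = (f + lam) / (2 * lam) := by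
    field_simp
  have hfract : Int.fract (f / (2 * lam) + 1 / 2) = f / (2 * lam) + 1 / 2 := by
    rw [Int.fract_eq_self, hshift]
    exact ⟨div_nonneg (by linarith) hlam.le, (div_lt_one hlam).mpr (by linarith)⟩
  rw [cmod, hfract]
  field_simp
  ring

theorem fdiff_sub_mem {H : AddSubgroup ℝ} {a b : ℤ → ℝ} (h : ∀ k, a k - b k ∈ H) (k : ℤ) :
    fdiff a k - fdiff b k ∈ H := by
  have hsplit : fdiff a k - fdiff b k = (a (k + 1) - b (k + 1)) - (a k - b k) := by
    simp only [fdiff]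
    ring
  rw [hsplit]
  exact H.sub_mem (h _) (h _)

theorem iterate_fdiff_sub_mem {H : AddSubgroup ℝ} {a b : ℤ → ℝ} (h : ∀ k, a k - b k ∈ H)
    (N : ℕ) (k : ℤ) : fdiff^[N] a k - fdiff^[N] b k ∈ H := by
  induction N generalizing k with
  | zero => exact h k
  | succ n ih =>
    simp only [Function.iterate_succ_apply']
    exact fdiff_sub_mem ih k

theorem recover_fdiff_from_modulo (lam : ℝ) (hlam : 0 < lam)
    (a y : ℤ → ℝ) (hy : ∀ k : ℤ, y k = cmod lam (a k)) (N : ℕ)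
    (hbound : ∀ k : ℤ, |fdiff^[N] a k| < lam) :
    ∀ k : ℤ, fdiff^[N] a k = cmod lam (fdiff^[N] y k) := by
  intro k
  have hsample : ∀ j, y j - a j ∈ zmultiples (2 * lam) := fun j =>
    hy j ▸ cmod_sub_self_mem_zmultiples hlam.ne' (a j)
  obtain ⟨m, hm⟩ := mem_zmultiples_iff.mp (iterate_fdiff_sub_mem hsample N k)
  obtain ⟨hlo, hhi⟩ := abs_lt.mp (hbound k)
  calc fdiff^[N] a k = cmod lam (fdiff^[N] a k) := (cmod_eq_self hlo.le hhi).symm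
    _ = cmod lam (fdiff^[N] a k + m • (2 * lam)) := (cmod_add_zsmul lam _ m).symm
    _ = cmod lam (fdiff^[N] y k) := by rw [hm, add_sub_cancel]
end

section
/- Let λ > 0 and x ∈ ℝ with |x − 2λm| < λ/2 for some integer m (i.e., x is within λ/2 of a point of the lattice 2λℤ). Then the rounding operation x ↦ 2λ⌈⌊x/λ⌋/2⌉ recovers the lattice point exactly: 2λ⌈⌊x/λ⌋/2⌉ = 2λm. -/
section

variable {α : Type*} [Field α] [LinearOrder α] [IsStrictOrderedRing α] [FloorRing α]

theorem Int.ceil_intCast_div_two_eq {k m : ℤ} (hlo : 2 * m - 1 ≤ k) (hhi : k ≤ 2 * m) :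
    ⌈(k : α) / 2⌉ = m := by
  rw [Int.ceil_eq_iff]
  have hlo' : ((2 * m - 1 : ℤ) : α) ≤ k := by exact_mod_cast hlo
  have hhi' : (k : α) ≤ ((2 * m : ℤ) : α) := by exact_mod_cast hhi
  push_cast at hlo' hhi'
  constructor <;> linarith

theorem Int.ceil_floor_div_two_eq_of_abs_sub_lt {y : α} {m : ℤ} (hy : |y - 2 * m| < 1) :
    ⌈(⌊y⌋ : α) / 2⌉ = m := by
  obtain ⟨hlo, hhi⟩ := abs_sub_lt_iff.mp hy
  apply Int.ceil_intCast_div_two_eq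
  · rw [Int.le_floor]
    push_cast
    linarith
  · rw [← Int.lt_add_one_iff, Int.floor_lt]
    push_cast
    linarith

end

theorem rounding_recovers_lattice (lam x : ℝ) (hlam : 0 < lam) (m : ℤ)
    (hx : |x - 2 * lam * (m : ℝ)| < lam / 2) :
    2 * lam * ((⌈((⌊x / lam⌋ : ℤ) : ℝ) / 2⌉ : ℤ) : ℝ) = 2 * lam * (m : ℝ) := by
  have hscaled : |x / lam - 2 * m| < 1 := by
    have hrw : x / lam - 2 * m = (x - 2 * lam * m) / lam := by field_simp
    rw [hrw, abs_div, abs_of_pos hlam, div_lt_one hlam]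
    linarith
  rw [Int.ceil_floor_div_two_eq_of_abs_sub_lt hscaled]
end
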